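/- Fix an integer m ≥ 1. Let a: ℕ≥1 → ℕ≥1 be any sequence satisfying a(1) = 1 and a(n+1) = n - a^{(m)}(n) + a^{(m+1)}(n) for all n ≥ 1, where a^{(j)} denotes j-fold iteration. Then a(n) = n - h(n) for all n ≥ 1, where h(n) is the sequence with h(1)=0 in which each non-negative integer k appears exactly mk+1 times. -/

import Mathlib

/-!
The hypothesis on `h` says that `h = k` exactly on the block `[blockStart m k, blockStart m (k + 1))`
of length `m k + 1`. Hence `descent h n = n - h n` subtracts `k` inside block `k`, is monotone, and
maps `[1, N]` into itself. Running `m` steps of it from the two ends of a block shows that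
`(descent h)^[m] n` lies in the block just below that of `n + 1`, i.e.
`h ((descent h)^[m] n) + 1 = h (n + 1)`. By strong induction `a` agrees with `descent h` on `[1, N]`,
hence so do their iterates, and the recurrence gives
`a (N + 1) = N - x + (x - h x) = N + 1 - h (N + 1)` with `x = (descent h)^[m] N`.
-/

theorem Set.EqOn.iterate_of_mapsTo {α : Type*} {f g : α → α} {s : Set α}
    (hfg : Set.EqOn f g s) (hg : Set.MapsTo g s s) (n : ℕ) :
    Set.EqOn f^[n] g^[n] s := by
  induction n with
  | zero => exact fun _ _ => rfl
  | succ n ih =>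
    intro x hx
    rw [Function.iterate_succ_apply', Function.iterate_succ_apply', ih hx,
      hfg (hg.iterate n hx)]

def blockStart (m k : ℕ) : ℕ := 1 + m * (k * (k - 1) / 2) + k

theorem blockStart_zero (m : ℕ) : blockStart m 0 = 1 := by
  simp [blockStart]

theorem blockStart_succ (m k : ℕ) : blockStart m (k + 1) = blockStart m k + m * k + 1 := by
  have hk : (k + 1) * k = k * (k - 1) + 2 * k := by
    cases k with
    | zero => rfl
    | succ k => simp; ring
  simp only [blockStart, Nat.add_sub_cancel, hk, Nat.add_mul_div_left _ _ two_pos]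
  ring

theorem succ_le_blockStart (m k : ℕ) : k + 1 ≤ blockStart m k := by
  unfold blockStart; omega

def descent (h : ℕ → ℕ) (n : ℕ) : ℕ := n - h n

section Blocks

variable {m : ℕ} {h : ℕ → ℕ}
  (hh : ∀ n k, 1 ≤ n → (h n = k ↔ blockStart m k ≤ n ∧ n < blockStart m (k + 1)))
include hh

theorem h_eq_of_mem_block {n k : ℕ} (h₁ : blockStart m k ≤ n) (h₂ : n < blockStart m (k + 1)) :
    h n = k :=
  (hh n k (by have := succ_le_blockStart m k; omega)).2 ⟨h₁, h₂⟩

theorem h_blockStart_add {k r : ℕ} (hr : r ≤ m * k) : h (blockStart m k + r) = k :=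
  h_eq_of_mem_block hh (Nat.le_add_right _ _) (by rw [blockStart_succ]; omega)

theorem h_blockStart (k : ℕ) : h (blockStart m k) = k := by
  simpa using h_blockStart_add hh (Nat.zero_le (m * k))

theorem mem_block_h {n : ℕ} (hn : 1 ≤ n) :
    blockStart m (h n) ≤ n ∧ n < blockStart m (h n + 1) :=
  (hh n (h n) hn).1 rfl

theorem one_le_descent {n : ℕ} (hn : 1 ≤ n) : 1 ≤ descent h n := by
  have := (mem_block_h hh hn).1
  have := succ_le_blockStart m (h n)
  unfold descent; omega

theorem mapsTo_descent (N : ℕ) : Set.MapsTo (descent h) (Set.Icc 1 N) (Set.Icc 1 N) :=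
  fun _ hx => ⟨one_le_descent hh hx.1, (Nat.sub_le _ _).trans hx.2⟩

theorem h_succ_le {n : ℕ} (hn : 1 ≤ n) : h (n + 1) ≤ h n + 1 := by
  obtain ⟨h₁, h₂⟩ := mem_block_h hh hn
  rcases (Nat.succ_le_of_lt h₂).lt_or_eq with hlt | heq
  · exact (h_eq_of_mem_block hh (by omega) hlt).le.trans (Nat.le_succ _)
  · rw [show n + 1 = _ from heq, h_blockStart hh]

theorem monotone_descent : Monotone (descent h) := by
  refine monotone_nat_of_le_succ fun n => ?_
  rcases Nat.eq_zero_or_pos n with rfl | hn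
  · simp [descent]
  · have := h_succ_le hh hn
    unfold descent; omega

theorem descent_iterate_blockStart_add {j k r : ℕ} (hj : j * k ≤ r) (hr : r ≤ m * k) :
    (descent h)^[j] (blockStart m k + r) = blockStart m k + (r - j * k) := by
  induction j with
  | zero => simp
  | succ j ih =>
    have hjk : (j + 1) * k = j * k + k := Nat.succ_mul j k
    rw [Function.iterate_succ_apply', ih (by omega), descent,
      h_blockStart_add hh (by omega)]
    omega

variable (hm : 1 ≤ m)
include hm

theorem descent_iterate_blockStart_succ (k : ℕ) :
    (descent h)^[m] (blockStart m (k + 1)) = blockStart m k := by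
  obtain ⟨m', rfl⟩ := Nat.exists_eq_add_of_le' hm
  have hstep : descent h (blockStart (m' + 1) (k + 1)) = blockStart (m' + 1) k + m' * k := by
    rw [descent, h_blockStart hh, blockStart_succ]
    ring_nf; omega
  rw [Function.iterate_succ_apply, hstep, descent_iterate_blockStart_add hh le_rfl
    (Nat.mul_le_mul_right _ (Nat.le_succ _)), Nat.sub_self, Nat.add_zero]

theorem descent_iterate_lt_blockStart (k : ℕ) :
    (descent h)^[m] (blockStart m (k + 1) + (m * (k + 1) - 1)) < blockStart m (k + 1) := by
  obtain ⟨m', rfl⟩ := Nat.exists_eq_add_of_le' hm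
  have hmk : (m' + 1) * (k + 1) = m' * (k + 1) + (k + 1) := Nat.succ_mul _ _
  rw [Function.iterate_succ_apply', descent_iterate_blockStart_add hh (by omega) (by omega),
    descent, h_blockStart_add hh (by omega)]
  have := succ_le_blockStart (m' + 1) (k + 1)
  omega

theorem h_descent_iterate_add_one {n : ℕ} (hn : 1 ≤ n) :
    h ((descent h)^[m] n) + 1 = h (n + 1) := by
  obtain ⟨h₁, h₂⟩ := mem_block_h hh hn
  rw [blockStart_succ] at h₂
  obtain ⟨r, hr⟩ := Nat.exists_eq_add_of_le h₁
  rcases (Nat.lt_succ_iff.1 (by omega : r < m * h n + 1)).lt_or_eq with hlt | rfl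
  · obtain ⟨k, hk⟩ : ∃ k, h n = k + 1 :=
      Nat.exists_eq_succ_of_ne_zero (by rintro h0; simp [h0] at hlt)
    rw [hk] at hr hlt
    have hlow : blockStart m k ≤ (descent h)^[m] n := by
      rw [← descent_iterate_blockStart_succ hh hm k]
      exact (monotone_descent hh).iterate m (by rw [hr]; exact Nat.le_add_right _ _)
    have hhigh : (descent h)^[m] n < blockStart m (k + 1) :=
      ((monotone_descent hh).iterate m (by omega : n ≤ _)).trans_lt
        (descent_iterate_lt_blockStart hh hm k)
    rw [h_eq_of_mem_block hh hlow hhigh, h_eq_of_mem_block hh (k := k + 1) (by omega)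
      (by rw [blockStart_succ]; omega)]
  · rw [hr, descent_iterate_blockStart_add hh le_rfl le_rfl, Nat.sub_self, add_zero,
      ← blockStart_succ, h_blockStart hh, h_blockStart hh]

end Blocks

theorem main_theorem_general (m : ℕ) (hm : 1 ≤ m)
    (h : ℕ → ℕ)
    (hh : ∀ n k : ℕ, 1 ≤ n →
      (h n = k ↔ (1 + m * (k * (k - 1) / 2) + k ≤ n ∧ n < 1 + m * ((k + 1) * k / 2) + (k + 1))))
    (a : ℕ → ℕ) (ha1 : a 1 = 1)
    (hrec : ∀ n : ℕ, 1 ≤ n →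
      (a (n + 1) : ℤ) = n - a^[m] n + a^[m + 1] n)
    (n : ℕ) (hn : 1 ≤ n) :
    a n = n - h n := by
  have hblock : ∀ n k, 1 ≤ n → (h n = k ↔ blockStart m k ≤ n ∧ n < blockStart m (k + 1)) := by
    simpa [blockStart] using hh
  induction n using Nat.strong_induction_on with
  | _ n ih =>
    obtain _ | _ | N := n
    · omega
    · have h1 := h_blockStart hblock 0
      rw [blockStart_zero] at h1
      rw [ha1, h1]
    · have heqOn : Set.EqOn a (descent h) (Set.Icc 1 (N + 1)) :=
        fun x hx => ih x (Nat.lt_succ_of_le hx.2) hx.1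
      have hiter := heqOn.iterate_of_mapsTo (mapsTo_descent hblock _)
      have hN : N + 1 ∈ Set.Icc 1 (N + 1) := ⟨le_add_self, le_rfl⟩
      have hstep := hrec (N + 1) le_add_self
      rw [hiter m hN, hiter (m + 1) hN, Function.iterate_succ_apply'] at hstep
      have hkey := h_descent_iterate_add_one hblock hm (n := N + 1) le_add_self
      have hx := one_le_descent hblock ((mapsTo_descent hblock _).iterate m hN).1
      set x := (descent h)^[m] (N + 1)
      rw [show descent h x = x - h x from rfl] at hx hstep
      omega

/-- Main theorem: any sequence `a : ℕ≥1 → ℕ≥1` with `a(1) = 1` satisfying the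
nested recurrence `a(n+1) = n - a^{(m)}(n) + a^{(m+1)}(n)` equals `n - h(n)`,
where `h` is the k-appearance sequence (each `k ≥ 0` appears `mk+1` times, `h(1)=0`). -/
theorem main_theorem (m : ℕ) (hm : 1 ≤ m)
    (h : ℕ → ℕ)
    (hh : ∀ n k : ℕ, 1 ≤ n →
      (h n = k ↔ (1 + m * (k * (k - 1) / 2) + k ≤ n ∧ n < 1 + m * ((k + 1) * k / 2) + (k + 1))))
    (a : ℕ → ℕ) (hapos : ∀ n, 1 ≤ n → 1 ≤ a n) (ha1 : a 1 = 1)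
    (hrec : ∀ n : ℕ, 1 ≤ n →
      (a (n + 1) : ℤ) = n - a^[m] n + a^[m + 1] n)
    (n : ℕ) (hn : 1 ≤ n) :
    a n = n - h n :=
  main_theorem_general m hm h hh a ha1 hrec n hn
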